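/- arXiv:2111.02631 — 5 statements merged into one kernel-verified Lean document; each statement's English description precedes it below -/
import Mathlib

section
/- Let Z be a set of 2^s - 1 points in a geometrically symmetric Cantor construction. If Z is NOT uniformly distributed, then there exists a basic interval of level at least s containing exactly 2 points of Z. Equivalently: if the maximal level R such that some level-R basic interval contains exactly 2 points of Z satisfies R ≤ s-1, then Z is uniformly distributed. -/
/-!
Suppose no basic interval of level at least `s` holds exactly two points. An interval holding
at least three points has a child holding at least two, hence (below level `s`) at least three;
since finitely many distinct addresses are separated at some finite level, this descent must stop,
so every interval of level `s` holds at most one point. An interval of level `k ≤ s` then holds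
at most `2 ^ (s - k)` points, and as the `2 ^ k` of them hold `2 ^ s - 1` points together, the
total deficit is one: each holds `2 ^ (s - k)` or `2 ^ (s - k) - 1` points.
-/

open Finset Filter

def prefixCount (Z : Finset (ℕ → Bool)) {k : ℕ} (w : Fin k → Bool) : ℕ :=
  #{z ∈ Z | ∀ i : Fin k, z i = w i}

theorem Finset.le_add_of_card_mul_le_sum_add {ι : Type*} {S : Finset ι} {f : ι → ℕ} {c d : ℕ}
    (hf : ∀ i ∈ S, f i ≤ c) (hsum : #S * c ≤ ∑ i ∈ S, f i + d) {i : ι} (hi : i ∈ S) :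
    c ≤ f i + d := by
  classical
  have hrest : ∑ j ∈ S.erase i, f j ≤ #(S.erase i) * c := by
    simpa using sum_le_card_nsmul _ _ _ fun j hj => hf j (mem_of_mem_erase hj)
  rw [← add_sum_erase S f hi, ← card_erase_add_one hi, add_mul, one_mul] at hsum
  omega

namespace prefixCount

variable (Z : Finset (ℕ → Bool))

theorem eq_add {k : ℕ} (w : Fin k → Bool) :
    prefixCount Z w = prefixCount Z (Fin.snoc w false) + prefixCount Z (Fin.snoc w true) := by
  have hsnoc : ∀ b, prefixCount Z (Fin.snoc w b) =
      #{z ∈ {z ∈ Z | ∀ i : Fin k, z i = w i} | z k = b} := by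
    intro b
    simp only [prefixCount, filter_filter, Fin.forall_fin_succ', Fin.snoc_castSucc, Fin.snoc_last,
      Fin.val_castSucc, Fin.val_last]
  rw [hsnoc, hsnoc, prefixCount,
    ← card_filter_add_card_filter_not (p := fun z : ℕ → Bool => z k = false)]
  simp only [Bool.not_eq_false]

theorem sum_eq_card (k : ℕ) : ∑ w : Fin k → Bool, prefixCount Z w = #Z := by
  rw [card_eq_sum_card_fiberwise (f := fun z (i : Fin k) => z i) (t := univ)
    fun _ _ => mem_coe.2 (mem_univ _)]
  simp only [prefixCount, funext_iff]

theorem eventually_le_one : ∀ᶠ k in atTop, ∀ w : Fin k → Bool, prefixCount Z w ≤ 1 := by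
  have hsep : ∀ᶠ k in atTop, ∀ p ∈ Z ×ˢ Z, p.1 ≠ p.2 → ∃ n < k, p.1 n ≠ p.2 n := by
    refine (eventually_all_finset _).2 fun p _ => ?_
    by_cases hp : p.1 = p.2
    · exact Eventually.of_forall fun _ h => absurd hp h
    obtain ⟨n, hn⟩ := Function.ne_iff.1 hp
    exact (eventually_gt_atTop n).mono fun k hk _ => ⟨n, hk, hn⟩
  refine hsep.mono fun k hk w => card_le_one.2 fun a ha b hb => ?_
  rw [mem_filter] at ha hb
  by_contra hab
  obtain ⟨n, hn, hne⟩ := hk (a, b) (mem_product.2 ⟨ha.1, hb.1⟩) hab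
  exact hne ((ha.2 ⟨n, hn⟩).trans (hb.2 ⟨n, hn⟩).symm)

theorem exists_eq_two {k : ℕ} {w : Fin k → Bool} (hw : 2 ≤ prefixCount Z w) :
    ∃ k', k ≤ k' ∧ ∃ w' : Fin k' → Bool, prefixCount Z w' = 2 := by
  by_contra! hne
  have deeper : ∀ n, ∃ w' : Fin (k + n) → Bool, 3 ≤ prefixCount Z w' := by
    intro n
    induction n with
    | zero => exact ⟨w, by have := hne k le_rfl w; omega⟩
    | succ n ih =>
      obtain ⟨w', hw'⟩ := ih
      have hsplit := eq_add Z w'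
      have h0 := hne _ (by omega) (Fin.snoc w' false)
      have h1 := hne _ (by omega) (Fin.snoc w' true)
      by_cases hb : 2 ≤ prefixCount Z (Fin.snoc w' false)
      · exact ⟨Fin.snoc w' false, by omega⟩
      · exact ⟨Fin.snoc w' true, by omega⟩
  obtain ⟨K, hK⟩ := eventually_atTop.1 (eventually_le_one Z)
  obtain ⟨w', hw'⟩ := deeper K
  have := hK (k + K) (by omega) w'
  omega

theorem le_two_pow_sub {K : ℕ} (hK : ∀ v : Fin K → Bool, prefixCount Z v ≤ 1) {k : ℕ}
    (hk : k ≤ K) (w : Fin k → Bool) : prefixCount Z w ≤ 2 ^ (K - k) := by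
  suffices ∀ n k, k + n = K → ∀ w : Fin k → Bool, prefixCount Z w ≤ 2 ^ n from
    this _ k (Nat.add_sub_cancel' hk) w
  intro n
  induction n with
  | zero => rintro k rfl w; exact hK w
  | succ n ih =>
    intro k hkn w
    rw [eq_add Z w, pow_succ, mul_two]
    exact add_le_add (ih (k + 1) (by omega) _) (ih (k + 1) (by omega) _)

end prefixCount

theorem stmt_1_general (s : ℕ) (Z : Finset (ℕ → Bool))
    (hcard : Z.card = 2 ^ s - 1)
    (m : ∀ k : ℕ, (Fin k → Bool) → ℕ)
    (hm : ∀ (k : ℕ) (w : Fin k → Bool),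
      m k w = (Z.filter (fun z => ∀ i : Fin k, z i.1 = w i)).card)
    (hnonunif : ¬ (∀ (k : ℕ) (w w' : Fin k → Bool), (m k w : ℤ) - m k w' ≤ 1)) :
    ∃ k : ℕ, s ≤ k ∧ ∃ w : Fin k → Bool, m k w = 2 := by
  obtain rfl : m = fun k w => prefixCount Z w := funext fun k => funext (hm k)
  by_contra! hne
  have hle : ∀ k, s ≤ k → ∀ w : Fin k → Bool, prefixCount Z w ≤ 1 := by
    intro k hk w
    by_contra! hw
    obtain ⟨k', hk', w', hw'⟩ := prefixCount.exists_eq_two Z hw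
    exact hne k' (hk.trans hk') w' hw'
  refine hnonunif fun k w w' => show (prefixCount Z w : ℤ) - prefixCount Z w' ≤ 1 from ?_
  rcases le_total s k with hsk | hks
  · have := hle k hsk w
    omega
  have hbound := prefixCount.le_two_pow_sub Z (hle s le_rfl) hks
  have hsum : #(univ : Finset (Fin k → Bool)) * 2 ^ (s - k) ≤
      ∑ v : Fin k → Bool, prefixCount Z v + 1 := by
    rw [prefixCount.sum_eq_card, hcard, card_univ, Fintype.card_fun, Fintype.card_bool,
      Fintype.card_fin, ← pow_add, Nat.add_sub_cancel' hks]
    omega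
  have hw := le_add_of_card_mul_le_sum_add (fun v _ => hbound v) hsum (mem_univ w')
  have := hbound w
  omega

/-- If a set of `2^s - 1` points of a geometrically symmetric Cantor construction
(modeled by binary addresses) is NOT uniformly distributed, then some basic
interval of level at least `s` contains exactly two of the points. -/
theorem stmt_1 (s : ℕ) (hs : 1 ≤ s) (Z : Finset (ℕ → Bool))
    (hcard : Z.card = 2 ^ s - 1)
    (m : ∀ k : ℕ, (Fin k → Bool) → ℕ)
    (hm : ∀ (k : ℕ) (w : Fin k → Bool),
      m k w = (Z.filter (fun z => ∀ i : Fin k, z i.1 = w i)).card)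
    (hnonunif : ¬ (∀ (k : ℕ) (w w' : Fin k → Bool), (m k w : ℤ) - m k w' ≤ 1)) :
    ∃ k : ℕ, s ≤ k ∧ ∃ w : Fin k → Bool, m k w = 2 :=
  stmt_1_general s Z hcard m hm hnonunif
end

section
/- For the sequence ℓ_s = ℓ_1^{α^{s-1}} with α ≥ 2 and 0 < ℓ_1 ≤ 1/3, and h_s = ℓ_s - 2ℓ_{s+1} (with ℓ_0 = 1, h_0 = 1 - 2ℓ_1), the inequality ∑_{k=0}^{n} 1/(2^k h_k) ≤ 7/(2^n h_n) holds for all n ≥ 0. -/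
/-! Put `a k = 1 / (2 ^ k * h k)`. Since `ℓ (s + 1) ≤ ℓ s ^ 2` for `s ≥ 1` and `ℓ 1 ≤ 1/3`, one
gets `h (k + 1) ≤ h k` for all `k`, and `7 * h (k + 1) ≤ h k` once `ℓ k ≤ 1/9`, i.e. for `k ≥ 2`.
Hence `a k ≤ 2 * a (k + 1)`, which bounds the sum up to `2` by `(1 + 2 + 4) * a 2`, and
`a k ≤ 2/7 * a (k + 1)` for `k ≥ 2`, which preserves `∑ a ≤ 7 * a n` from then on because
`7 * a n + a (n + 1) ≤ 3 * a (n + 1)`. -/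

open Finset

theorem sum_range_le_geom_sum_mul {a : ℕ → ℝ} {r : ℝ} (hr : 0 ≤ r) {n : ℕ}
    (h : ∀ k < n, a k ≤ r * a (k + 1)) :
    ∑ k ∈ range (n + 1), a k ≤ (∑ j ∈ range (n + 1), r ^ j) * a n := by
  induction n with
  | zero => simp
  | succ n ih =>
    calc ∑ k ∈ range (n + 2), a k
        = ∑ k ∈ range (n + 1), a k + a (n + 1) := sum_range_succ a (n + 1)
      _ ≤ (∑ j ∈ range (n + 1), r ^ j) * (r * a (n + 1)) + a (n + 1) := by
          gcongr
          exact (ih fun k hk => h k (by omega)).trans (by gcongr; exact h n (by omega))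
      _ = (∑ j ∈ range (n + 2), r ^ j) * a (n + 1) := by rw [geom_sum_succ (n := n + 1)]; ring

theorem sum_range_le_mul_of_le_mul_succ {a : ℕ → ℝ} {r C : ℝ} {m : ℕ} (ha : ∀ k, 0 ≤ a k)
    (hC : 0 ≤ C) (hrC : C * r + 1 ≤ C) (hm : ∑ k ∈ range (m + 1), a k ≤ C * a m)
    (h : ∀ k, m ≤ k → a k ≤ r * a (k + 1)) {n : ℕ} (hn : m ≤ n) :
    ∑ k ∈ range (n + 1), a k ≤ C * a n := by
  induction n, hn using Nat.le_induction with
  | base => exact hm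
  | succ n hmn ih =>
    calc ∑ k ∈ range (n + 2), a k
        = ∑ k ∈ range (n + 1), a k + a (n + 1) := sum_range_succ a (n + 1)
      _ ≤ C * (r * a (n + 1)) + a (n + 1) := by gcongr; exact ih.trans (by gcongr; exact h n hmn)
      _ = (C * r + 1) * a (n + 1) := by ring
      _ ≤ C * a (n + 1) := by gcongr; exact ha _

theorem one_div_two_pow_mul_le {h : ℕ → ℝ} {c : ℝ} {k : ℕ} (hc : 0 < c) (hk : 0 < h (k + 1))
    (hle : c * h (k + 1) ≤ h k) :
    1 / (2 ^ k * h k) ≤ 2 / c * (1 / (2 ^ (k + 1) * h (k + 1))) := by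
  calc 1 / (2 ^ k * h k) ≤ 1 / (2 ^ k * (c * h (k + 1))) := by gcongr
    _ = 2 / c * (1 / (2 ^ (k + 1) * h (k + 1))) := by rw [pow_succ]; field_simp

theorem rpow_mul_le_rpow_sq {x α e : ℝ} (hx : 0 < x) (hx1 : x ≤ 1) (hα : 2 ≤ α) (he : 0 ≤ e) :
    x ^ (e * α) ≤ (x ^ e) ^ 2 := by
  rw [Real.rpow_mul hx.le, ← Real.rpow_two]
  exact Real.rpow_le_rpow_of_exponent_ge (by positivity) (Real.rpow_le_one hx.le hx1 he) hα

def gap (ℓ : ℕ → ℝ) (k : ℕ) : ℝ := ℓ k - 2 * ℓ (k + 1)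

section SquareDecay

variable {ℓ : ℕ → ℝ}

theorem mul_gap_succ_le_gap {c : ℝ} {k : ℕ} (hc : 0 ≤ c) (hk : 0 ≤ ℓ k) (hk2 : 0 ≤ ℓ (k + 2))
    (hsq : ℓ (k + 1) ≤ ℓ k ^ 2) (hck : (c + 2) * ℓ k ≤ 1) : c * gap ℓ (k + 1) ≤ gap ℓ k := by
  -- `gap ℓ (k + 1) ≤ ℓ (k + 1) ≤ ℓ k ^ 2`, while `gap ℓ k ≥ ℓ k - 2 * ℓ k ^ 2`
  unfold gap
  nlinarith [mul_le_mul_of_nonneg_left hck hk]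

theorem gap_pos (h0 : ℓ 0 = 1) (hpos : ∀ s, 0 < ℓ (s + 1)) (hle : ∀ s, ℓ (s + 1) ≤ 1 / 3)
    (hsq : ∀ s, ℓ (s + 2) ≤ ℓ (s + 1) ^ 2) (k : ℕ) : 0 < gap ℓ k := by
  unfold gap
  rcases k with _ | s
  · rw [h0]; linarith [hle 0]
  · nlinarith [hsq s, hpos s, hle s]

theorem gap_succ_le (h0 : ℓ 0 = 1) (hpos : ∀ s, 0 < ℓ (s + 1)) (hle : ∀ s, ℓ (s + 1) ≤ 1 / 3)
    (hsq : ∀ s, ℓ (s + 2) ≤ ℓ (s + 1) ^ 2) (k : ℕ) : gap ℓ (k + 1) ≤ gap ℓ k := by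
  rcases k with _ | s
  · unfold gap; rw [h0]; linarith [hpos 1, hle 0]
  · simpa using mul_gap_succ_le_gap zero_le_one (hpos s).le (hpos _).le (hsq s)
      (by linarith [hle s])

theorem seven_mul_gap_succ_le (hpos : ∀ s, 0 < ℓ (s + 1)) (hle : ∀ s, ℓ (s + 1) ≤ 1 / 3)
    (hsq : ∀ s, ℓ (s + 2) ≤ ℓ (s + 1) ^ 2) {k : ℕ} (hk : 2 ≤ k) :
    7 * gap ℓ (k + 1) ≤ gap ℓ k := by
  obtain ⟨s, rfl⟩ : ∃ s, k = s + 2 := ⟨k - 2, by omega⟩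
  refine mul_gap_succ_le_gap (by norm_num) (hpos _).le (hpos _).le (hsq _) ?_
  nlinarith [hsq s, hpos s, hle s]

theorem sum_range_one_div_two_pow_mul_gap_le (h0 : ℓ 0 = 1) (hpos : ∀ s, 0 < ℓ (s + 1))
    (hle : ∀ s, ℓ (s + 1) ≤ 1 / 3) (hsq : ∀ s, ℓ (s + 2) ≤ ℓ (s + 1) ^ 2) (n : ℕ) :
    ∑ k ∈ range (n + 1), 1 / (2 ^ k * gap ℓ k) ≤ 7 / (2 ^ n * gap ℓ n) := by
  have hgap := gap_pos h0 hpos hle hsq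
  set a : ℕ → ℝ := fun k => 1 / (2 ^ k * gap ℓ k)
  have ha (k : ℕ) : 0 ≤ a k := by have := hgap k; positivity
  have hdouble (k : ℕ) : a k ≤ 2 * a (k + 1) := by
    have := gap_succ_le h0 hpos hle hsq k
    exact (one_div_two_pow_mul_le one_pos (hgap _) (by rwa [one_mul])).trans_eq (by rw [div_one])
  have hseventh (k : ℕ) (hk : 2 ≤ k) : a k ≤ 2 / 7 * a (k + 1) :=
    one_div_two_pow_mul_le (by norm_num) (hgap _) (seven_mul_gap_succ_le hpos hle hsq hk)
  rw [show 7 / (2 ^ n * gap ℓ n) = 7 * a n by simp only [a]; ring]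
  rcases lt_or_ge n 2 with hn | hn
  · refine (sum_range_le_geom_sum_mul (by norm_num) fun k _ => hdouble k).trans ?_
    gcongr
    · exact ha n
    · interval_cases n <;> norm_num [sum_range_succ]
  · have hsum2 : ∑ k ∈ range 3, a k ≤ 7 * a 2 :=
      (sum_range_le_geom_sum_mul (by norm_num) fun k _ => hdouble k).trans_eq
        (by norm_num [sum_range_succ])
    exact sum_range_le_mul_of_le_mul_succ ha (by norm_num) (by norm_num) hsum2 hseventh hn

end SquareDecay

theorem stmt_2 (α l1 : ℝ) (hα : 2 ≤ α) (hl1 : 0 < l1) (hl1' : l1 ≤ 1/3)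
    (ℓ h : ℕ → ℝ) (hℓ0 : ℓ 0 = 1)
    (hℓ : ∀ s : ℕ, 1 ≤ s → ℓ s = l1 ^ (α ^ (s - 1)))
    (hh : ∀ s : ℕ, h s = ℓ s - 2 * ℓ (s + 1)) (n : ℕ) :
    ∑ k ∈ Finset.range (n + 1), 1 / (2 ^ k * h k) ≤ 7 / (2 ^ n * h n) := by
  obtain rfl : h = gap ℓ := funext hh
  have hℓ' (s : ℕ) : ℓ (s + 1) = l1 ^ α ^ s := by simpa using hℓ (s + 1) (by omega)
  refine sum_range_one_div_two_pow_mul_gap_le hℓ0 (fun s => ?pos) (fun s => ?le) (fun s => ?sq) n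
  case pos => rw [hℓ']; positivity
  case le =>
    rw [hℓ']
    calc l1 ^ α ^ s ≤ l1 ^ (1 : ℝ) :=
          Real.rpow_le_rpow_of_exponent_ge hl1 (by linarith) (one_le_pow₀ (by linarith))
      _ ≤ 1 / 3 := by rwa [Real.rpow_one]
  case sq =>
    rw [hℓ', hℓ', pow_succ]
    exact rpow_mul_le_rpow_sq hl1 (by linarith) hα (by positivity)
end

section
/- Let 0 < β ≤ 1/3 and s ≥ 3. Consider the geometrically symmetric Cantor set K_β with ℓ_k = β^k, and interpolation nodes Y_{s-1} (the 2^s endpoints of the basic intervals of level s-1), ordered increasingly as x_1 < ... < x_{2^s}. Let k = 2^{s-1} - 1 (so x_k = ℓ_1 - ℓ_{s-1}) and x̃ = ℓ_s. Then the fundamental Lagrange polynomial l_k satisfies |l_k(x̃)| ≥ ℓ_s · ((1 - ℓ_s)/(1 - ℓ_1 + ℓ_{s-1}))^{2^{s-1}}. -/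
/-!
Write `a = ℓ_{s-1}`. The nodes `Y_{s-1} = β Y_{s-2} ∪ (1 - β + β Y_{s-2})` split into `2^{s-1}`
nodes in `[0, β]` and `2^{s-1}` nodes in `[1 - β, 1]`. On the right, `|x̃ - y| / |x_k - y|` is
decreasing in `y`, so each factor is at least its value `(1 - ℓ_s) / (1 - ℓ_1 + ℓ_{s-1})` at
`y = 1`. On the left, the reflection `y ↦ β - y` permutes the nodes and sends `x_k` to `a`, so
the denominator is `∏_{y ≠ a} |a - y|`. Apart from `0`, `a` and `x_k`, every left node lies
beyond `a`, where `|a - y| ≤ |x̃ - y|`; the three remaining factors leave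
`ℓ_s (1 - β) / (β - 2a) ≥ ℓ_s`.
-/

open Finset

/-- The paper's `Y_k`: the `2^(k+1)` endpoints of the basic intervals of level `k`, built
through the self-similarity `K_β = β K_β ∪ (1 - β + β K_β)`. -/
noncomputable def cantorEndpoints (β : ℝ) : ℕ → Finset ℝ
  | 0 => {0, 1}
  | k + 1 => (cantorEndpoints β k).image (β * ·) ∪ (cantorEndpoints β k).image (1 - β + β * ·)

section CantorEndpoints

variable {β : ℝ}

@[simp] lemma mem_cantorEndpoints_zero {x : ℝ} : x ∈ cantorEndpoints β 0 ↔ x = 0 ∨ x = 1 := by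
  simp [cantorEndpoints]

lemma zero_mem_cantorEndpoints : ∀ k, (0 : ℝ) ∈ cantorEndpoints β k
  | 0 => by simp [cantorEndpoints]
  | k + 1 => mem_union_left _ <| mem_image.2 ⟨0, zero_mem_cantorEndpoints k, mul_zero β⟩

lemma pow_mem_cantorEndpoints : ∀ k, β ^ k ∈ cantorEndpoints β k
  | 0 => by simp [cantorEndpoints]
  | k + 1 => mem_union_left _ <| mem_image.2 ⟨_, pow_mem_cantorEndpoints k, (pow_succ' β k).symm⟩

lemma one_sub_mem_cantorEndpoints {k : ℕ} {x : ℝ} (hx : x ∈ cantorEndpoints β k) :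
    1 - x ∈ cantorEndpoints β k := by
  induction k generalizing x with
  | zero => rcases mem_cantorEndpoints_zero.1 hx with rfl | rfl <;> simp
  | succ k ih =>
    simp only [cantorEndpoints, mem_union, mem_image] at hx ⊢
    rcases hx with ⟨z, hz, rfl⟩ | ⟨z, hz, rfl⟩
    · exact Or.inr ⟨1 - z, ih hz, by ring⟩
    · exact Or.inl ⟨1 - z, ih hz, by ring⟩

lemma mem_Icc_of_mem_cantorEndpoints (h0 : 0 ≤ β) (h1 : β ≤ 1) {k : ℕ} {x : ℝ}
    (hx : x ∈ cantorEndpoints β k) : x ∈ Set.Icc 0 1 := by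
  induction k generalizing x with
  | zero => rcases mem_cantorEndpoints_zero.1 hx with rfl | rfl <;> norm_num
  | succ k ih =>
    simp only [cantorEndpoints, mem_union, mem_image] at hx
    rcases hx with ⟨z, hz, rfl⟩ | ⟨z, hz, rfl⟩ <;> obtain ⟨hz0, hz1⟩ := ih hz <;>
      constructor <;> nlinarith

lemma eq_zero_or_pow_le_of_mem_cantorEndpoints (h0 : 0 ≤ β) (h1 : β ≤ 1 / 2) {k : ℕ} {x : ℝ}
    (hx : x ∈ cantorEndpoints β k) : x = 0 ∨ β ^ k ≤ x := by
  induction k generalizing x with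
  | zero => rcases mem_cantorEndpoints_zero.1 hx with rfl | rfl <;> simp
  | succ k ih =>
    simp only [cantorEndpoints, mem_union, mem_image] at hx
    rcases hx with ⟨z, hz, rfl⟩ | ⟨z, hz, rfl⟩
    · rcases ih hz with rfl | hz
      · simp
      · exact Or.inr (by rw [pow_succ']; exact mul_le_mul_of_nonneg_left hz h0)
    · have hpow : β ^ (k + 1) ≤ β := pow_le_of_le_one h0 (by linarith) (by omega)
      have := (mem_Icc_of_mem_cantorEndpoints h0 (by linarith) hz).1
      exact Or.inr (by nlinarith)

lemma disjoint_image_cantorEndpoints (h0 : 0 ≤ β) (h1 : β < 1 / 2) (k : ℕ) :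
    Disjoint ((cantorEndpoints β k).image (β * ·))
      ((cantorEndpoints β k).image (1 - β + β * ·)) := by
  simp only [disjoint_left, mem_image]
  rintro _ ⟨x, hx, rfl⟩ ⟨z, hz, hxz⟩
  obtain ⟨hx0, hx1⟩ := mem_Icc_of_mem_cantorEndpoints h0 (by linarith) hx
  obtain ⟨hz0, hz1⟩ := mem_Icc_of_mem_cantorEndpoints h0 (by linarith) hz
  nlinarith

lemma card_cantorEndpoints (h0 : 0 < β) (h1 : β < 1 / 2) :
    ∀ k, #(cantorEndpoints β k) = 2 ^ (k + 1)
  | 0 => by simp [cantorEndpoints]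
  | k + 1 => by
    rw [cantorEndpoints, card_union_of_disjoint (disjoint_image_cantorEndpoints h0.le h1 k),
      card_image_of_injective _ (mul_right_injective₀ h0.ne'),
      card_image_of_injective _ fun a b h => mul_left_cancel₀ h0.ne' (add_left_cancel h),
      card_cantorEndpoints h0 h1 k]
    ring

lemma sub_mem_image_mul_cantorEndpoints {k : ℕ} {y : ℝ}
    (hy : y ∈ (cantorEndpoints β k).image (β * ·)) :
    β - y ∈ (cantorEndpoints β k).image (β * ·) := by
  obtain ⟨x, hx, rfl⟩ := mem_image.1 hy
  exact mem_image.2 ⟨1 - x, one_sub_mem_cantorEndpoints hx, by ring⟩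

lemma eq_zero_or_pow_succ_le_of_mem_image_mul_cantorEndpoints (h0 : 0 ≤ β) (h1 : β ≤ 1 / 2)
    {k : ℕ} {y : ℝ} (hy : y ∈ (cantorEndpoints β k).image (β * ·)) :
    y = 0 ∨ β ^ (k + 1) ≤ y := by
  obtain ⟨x, hx, rfl⟩ := mem_image.1 hy
  rcases eq_zero_or_pow_le_of_mem_cantorEndpoints h0 h1 hx with rfl | hx
  · simp
  · exact Or.inr ((pow_succ' β k).trans_le (mul_le_mul_of_nonneg_left hx h0))

lemma mem_Icc_of_mem_image_affine_cantorEndpoints (h0 : 0 ≤ β) (h1 : β ≤ 1) {k : ℕ} {y : ℝ}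
    (hy : y ∈ (cantorEndpoints β k).image (1 - β + β * ·)) : y ∈ Set.Icc (1 - β) 1 := by
  obtain ⟨x, hx, rfl⟩ := mem_image.1 hy
  obtain ⟨hx0, hx1⟩ := mem_Icc_of_mem_cantorEndpoints h0 h1 hx
  constructor <;> nlinarith

lemma card_image_affine_cantorEndpoints (h0 : 0 < β) (h1 : β < 1 / 2) (k : ℕ) :
    #((cantorEndpoints β k).image (1 - β + β * ·)) = 2 ^ (k + 1) := by
  rw [card_image_of_injective _ fun a b h => mul_left_cancel₀ h0.ne' (add_left_cancel h),
    card_cantorEndpoints h0 h1]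

end CantorEndpoints

section LeftEndpoints

variable {β : ℝ} {L : ℕ → ℕ → ℝ}

/-- The recursion for `L` splits intervals at the finest level; this converts it into splitting
at the coarsest level, which is how `cantorEndpoints` is built. -/
lemma left_endpoint_succ_of_lt (hL0 : L 0 0 = 0) (hLleft : ∀ k j, L (k + 1) (2 * j) = L k j)
    (hLright : ∀ k j, L (k + 1) (2 * j + 1) = L k j + β ^ k - β ^ (k + 1)) :
    ∀ k j, j < 2 ^ k →
      L (k + 1) j = β * L k j ∧ L (k + 1) (2 ^ k + j) = 1 - β + β * L k j := by
  intro k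
  induction k with
  | zero =>
    intro j hj
    obtain rfl : j = 0 := by omega
    have h0 := hLleft 0 0
    have h1 := hLright 0 0
    norm_num at h0 h1
    simp [h0, h1, hL0]
  | succ k ih =>
    intro j hj
    obtain ⟨i, rfl | rfl⟩ : ∃ i, j = 2 * i ∨ j = 2 * i + 1 := ⟨j / 2, by omega⟩
    all_goals
      obtain ⟨hlo, hhi⟩ := ih i (by rw [pow_succ] at hj; omega)
      have hshift : 2 ^ (k + 1) = 2 * 2 ^ k := by ring
    · rw [hshift, ← mul_add, hLleft, hLleft, hLleft, hlo, hhi]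
      exact ⟨rfl, rfl⟩
    · rw [hshift, show 2 * 2 ^ k + (2 * i + 1) = 2 * (2 ^ k + i) + 1 by ring, hLright, hLright,
        hLright, hlo, hhi]
      constructor <;> ring

lemma image_union_image_eq_cantorEndpoints (hL0 : L 0 0 = 0)
    (hLleft : ∀ k j, L (k + 1) (2 * j) = L k j)
    (hLright : ∀ k j, L (k + 1) (2 * j + 1) = L k j + β ^ k - β ^ (k + 1)) (k : ℕ) :
    (range (2 ^ k)).image (L k) ∪ (range (2 ^ k)).image (fun j => L k j + β ^ k) =
      cantorEndpoints β k := by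
  induction k with
  | zero => simp [cantorEndpoints, hL0]
  | succ k ih =>
    have hsim := left_endpoint_succ_of_lt hL0 hLleft hLright k
    ext y
    rw [cantorEndpoints, ← ih]
    simp only [mem_union, mem_image, mem_range]
    constructor
    · rintro (⟨j, hj, rfl⟩ | ⟨j, hj, rfl⟩) <;> by_cases hjk : j < 2 ^ k
      · exact Or.inl ⟨_, Or.inl ⟨j, hjk, rfl⟩, (hsim j hjk).1.symm⟩
      · obtain ⟨i, hi, rfl⟩ : ∃ i < 2 ^ k, j = 2 ^ k + i :=
          ⟨j - 2 ^ k, by rw [pow_succ] at hj; omega, by omega⟩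
        exact Or.inr ⟨_, Or.inl ⟨i, hi, rfl⟩, (hsim i hi).2.symm⟩
      · exact Or.inl ⟨_, Or.inr ⟨j, hjk, rfl⟩, by rw [(hsim j hjk).1]; ring⟩
      · obtain ⟨i, hi, rfl⟩ : ∃ i < 2 ^ k, j = 2 ^ k + i :=
          ⟨j - 2 ^ k, by rw [pow_succ] at hj; omega, by omega⟩
        exact Or.inr ⟨_, Or.inr ⟨i, hi, rfl⟩, by rw [(hsim i hi).2]; ring⟩
    · have hlt : ∀ i < 2 ^ k, 2 ^ k + i < 2 ^ (k + 1) := fun i hi => by rw [pow_succ]; omega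
      have hlt' : ∀ i < 2 ^ k, i < 2 ^ (k + 1) := fun i hi => by rw [pow_succ]; omega
      rintro (⟨_, ⟨j, hj, rfl⟩ | ⟨j, hj, rfl⟩, rfl⟩ | ⟨_, ⟨j, hj, rfl⟩ | ⟨j, hj, rfl⟩, rfl⟩)
      · exact Or.inl ⟨j, hlt' j hj, (hsim j hj).1⟩
      · exact Or.inr ⟨j, hlt' j hj, by rw [(hsim j hj).1]; ring⟩
      · exact Or.inl ⟨2 ^ k + j, hlt j hj, (hsim j hj).2⟩
      · exact Or.inr ⟨2 ^ k + j, hlt j hj, by rw [(hsim j hj).2]; ring⟩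

end LeftEndpoints

lemma prod_erase_abs_sub_eq_of_reflect {S : Finset ℝ} {a b c : ℝ} (hab : a + b = c)
    (hS : ∀ y ∈ S, c - y ∈ S) :
    ∏ y ∈ S.erase a, |a - y| = ∏ y ∈ S.erase b, |b - y| := by
  refine prod_nbij' (c - ·) (c - ·) (fun y hy => ?_) (fun y hy => ?_) (by simp) (by simp)
    (fun y _ => ?_)
  · obtain ⟨hya, hy⟩ := mem_erase.1 hy
    exact mem_erase.2 ⟨fun h => hya (by linarith), hS y hy⟩
  · obtain ⟨hyb, hy⟩ := mem_erase.1 hy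
    exact mem_erase.2 ⟨fun h => hyb (by linarith), hS y hy⟩
  · rw [← abs_neg]
    congr 1
    linarith

lemma prod_abs_sub_le_prod_abs_sub {S : Finset ℝ} {a x : ℝ} (hxa : x ≤ a)
    (hS : ∀ y ∈ S, a ≤ y) : ∏ y ∈ S, |a - y| ≤ ∏ y ∈ S, |x - y| := by
  refine prod_le_prod (fun _ _ => abs_nonneg _) fun y hy => ?_
  rw [abs_sub_comm, abs_sub_comm x, abs_of_nonneg (by linarith [hS y hy]),
    abs_of_nonneg (by linarith [hS y hy])]
  linarith

lemma pow_card_le_prod_abs_div {B : Finset ℝ} {a b : ℝ} (hab : a < b)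
    (hB : ∀ y ∈ B, b < y ∧ y ≤ 1) :
    ((1 - a) / (1 - b)) ^ #B ≤ ∏ y ∈ B, |(a - y) / (b - y)| := by
  rw [← prod_const]
  refine prod_le_prod (fun y hy => ?_) fun y hy => ?_
  all_goals obtain ⟨hby, hy1⟩ := hB y hy
  · exact div_nonneg (by linarith) (by linarith)
  · rw [abs_div, abs_sub_comm a, abs_sub_comm b, abs_of_pos (by linarith),
      abs_of_pos (by linarith), div_le_div_iff₀ (by linarith) (by linarith)]
    nlinarith [mul_nonneg (sub_nonneg.2 hab.le) (sub_nonneg.2 hy1)]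

lemma pow_le_prod_abs_left_half {β : ℝ} (hβ : 0 < β) (hβ2 : β < 1 / 2) {q : ℕ} (hq : 1 ≤ q) :
    β ^ (q + 2) ≤ ∏ y ∈ ((cantorEndpoints β q).image (β * ·)).erase (β - β ^ (q + 1)),
      |(β ^ (q + 2) - y) / (β - β ^ (q + 1) - y)| := by
  set A := (cantorEndpoints β q).image (β * ·)
  set a := β ^ (q + 1)
  rw [show β ^ (q + 2) = β * a by ring]
  have ha : 0 < a := by positivity
  have h2a : 2 * a < β := by
    have : a ≤ β ^ 2 := pow_le_pow_of_le_one hβ.le (by linarith) (by omega)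
    nlinarith
  have hA_reflect : ∀ y ∈ A, β - y ∈ A := fun _ => sub_mem_image_mul_cantorEndpoints
  have hA_gap : ∀ y ∈ A, y = 0 ∨ a ≤ y := fun _ =>
    eq_zero_or_pow_succ_le_of_mem_image_mul_cantorEndpoints hβ.le hβ2.le
  have h0A : (0 : ℝ) ∈ A := mem_image.2 ⟨0, zero_mem_cantorEndpoints q, mul_zero β⟩
  have haA : a ∈ A := mem_image.2 ⟨_, pow_mem_cantorEndpoints q, (pow_succ' β q).symm⟩
  have hxkA : β - a ∈ A := hA_reflect a haA
  set S := ((A.erase (β - a)).erase a).erase 0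
  have hnum : ∏ y ∈ A.erase (β - a), |β * a - y| =
      (a - β * a) * (β * a * ∏ y ∈ S, |β * a - y|) := by
    rw [← mul_prod_erase _ _ (mem_erase.2 ⟨by linarith, haA⟩),
      ← mul_prod_erase _ _ (mem_erase.2 ⟨ha.ne, mem_erase.2 ⟨by linarith, h0A⟩⟩),
      abs_sub_comm, abs_of_pos (by nlinarith), sub_zero, abs_of_pos (by positivity)]
  have hden : ∏ y ∈ A.erase (β - a), |β - a - y| = (β - 2 * a) * (a * ∏ y ∈ S, |a - y|) := by
    have hS_comm : S = ((A.erase a).erase (β - a)).erase 0 := by simp only [S, erase_right_comm]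
    rw [prod_erase_abs_sub_eq_of_reflect (b := a) (by ring) hA_reflect, hS_comm,
      ← mul_prod_erase _ _ (mem_erase.2 ⟨by linarith, hxkA⟩),
      ← mul_prod_erase _ _ (mem_erase.2 ⟨by linarith, mem_erase.2 ⟨ha.ne, h0A⟩⟩),
      abs_sub_comm, abs_of_pos (by linarith), sub_zero, abs_of_pos ha]
    ring
  have hS : ∏ y ∈ S, |a - y| ≤ ∏ y ∈ S, |β * a - y| := by
    refine prod_abs_sub_le_prod_abs_sub (by nlinarith) fun y hy => ?_
    obtain ⟨hy0, -, -, hyA⟩ := by simpa only [S, mem_erase] using hy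
    exact (hA_gap y hyA).resolve_left hy0
  have hden_pos : 0 < ∏ y ∈ A.erase (β - a), |β - a - y| :=
    prod_pos fun y hy => abs_pos.2 (sub_ne_zero.2 (ne_of_mem_erase hy).symm)
  simp only [abs_div]
  rw [prod_div_distrib, le_div_iff₀ hden_pos, hnum, hden]
  calc β * a * ((β - 2 * a) * (a * ∏ y ∈ S, |a - y|))
      = (β * a * a) * ((β - 2 * a) * ∏ y ∈ S, |a - y|) := by ring
    _ ≤ (β * a * a) * ((1 - β) * ∏ y ∈ S, |β * a - y|) :=
        mul_le_mul_of_nonneg_left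
          (mul_le_mul (by linarith) hS (prod_nonneg fun _ _ => abs_nonneg _) (by linarith))
          (by positivity)
    _ = (a - β * a) * (β * a * ∏ y ∈ S, |β * a - y|) := by ring

lemma pow_le_prod_abs_right_half {β : ℝ} (hβ : 0 < β) (hβ2 : β < 1 / 2) {q : ℕ} (hq : 1 ≤ q) :
    ((1 - β ^ (q + 2)) / (1 - β + β ^ (q + 1))) ^ 2 ^ (q + 1) ≤
      ∏ y ∈ (cantorEndpoints β q).image (1 - β + β * ·),
        |(β ^ (q + 2) - y) / (β - β ^ (q + 1) - y)| := by
  have hpow : β ^ (q + 1) ≤ β ^ 2 := pow_le_pow_of_le_one hβ.le (by linarith) (by omega)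
  have hB : ∀ y ∈ (cantorEndpoints β q).image (1 - β + β * ·),
      β - β ^ (q + 1) < y ∧ y ≤ 1 := fun y hy => by
    obtain ⟨hy1, hy2⟩ := mem_Icc_of_mem_image_affine_cantorEndpoints hβ.le (by linarith) hy
    exact ⟨by nlinarith [pow_pos hβ (q + 1)], hy2⟩
  have h := pow_card_le_prod_abs_div (a := β ^ (q + 2)) (by nlinarith [pow_succ β (q + 1)]) hB
  rwa [card_image_affine_cantorEndpoints hβ hβ2,
    show 1 - (β - β ^ (q + 1)) = 1 - β + β ^ (q + 1) by ring] at h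

/-- `L k j` is the left endpoint of the `j`-th basic interval of level `k` of `K_β`
(lengths `β^k`); `Y` is the set of the `2^s` endpoints of the level-`(s-1)` intervals.
The fundamental Lagrange polynomial at the node `x_k = β - β^(s-1)` evaluated at
`x̃ = β^s` is the displayed product. -/
theorem stmt_7 (β : ℝ) (hβ : 0 < β) (hβ' : β ≤ 1/3) (s : ℕ) (hs : 3 ≤ s)
    (L : ℕ → ℕ → ℝ) (hL0 : L 0 0 = 0)
    (hLleft : ∀ k j, L (k + 1) (2 * j) = L k j)
    (hLright : ∀ k j, L (k + 1) (2 * j + 1) = L k j + β ^ k - β ^ (k + 1))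
    (Y : Finset ℝ)
    (hY : Y = (Finset.range (2 ^ (s - 1))).image (L (s - 1)) ∪
      (Finset.range (2 ^ (s - 1))).image (fun j => L (s - 1) j + β ^ (s - 1))) :
    β ^ s * ((1 - β ^ s) / (1 - β + β ^ (s - 1))) ^ 2 ^ (s - 1) ≤
      |∏ y ∈ Y.erase (β - β ^ (s - 1)),
        ((β ^ s - y) / ((β - β ^ (s - 1)) - y))| := by
  obtain ⟨q, rfl⟩ : ∃ q, s = q + 2 := ⟨s - 2, by omega⟩
  have hq : 1 ≤ q := by omega
  have hβ2 : β < 1 / 2 := by linarith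
  rw [show q + 2 - 1 = q + 1 by omega] at hY ⊢
  have hxk : β - β ^ (q + 1) ∉ (cantorEndpoints β q).image (1 - β + β * ·) := fun h => by
    have := (mem_Icc_of_mem_image_affine_cantorEndpoints hβ.le (by linarith) h).1
    nlinarith [pow_pos hβ (q + 1)]
  have hdisj := (disjoint_image_cantorEndpoints hβ.le hβ2 q).mono_left
    (erase_subset (β - β ^ (q + 1)) _)
  rw [hY, image_union_image_eq_cantorEndpoints hL0 hLleft hLright, cantorEndpoints,
    erase_union_distrib, erase_eq_of_notMem hxk, prod_union hdisj, abs_mul, abs_prod, abs_prod]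
  exact mul_le_mul_of_nonneg (pow_le_prod_abs_left_half hβ hβ2 hq)
    (pow_le_prod_abs_right_half hβ hβ2 hq) (by positivity) (prod_nonneg fun _ _ => abs_nonneg _)
end

section
/- For 1 < α < 2 and n ≥ 3, the function f_n(α) = (1 - 2·3^{-α^n}) / (3^{α^{n-1}} - 2) is strictly decreasing in α on (1,2), and consequently f_n(α) < f_n(1) = 1/3. In particular, with ℓ_1 = (1/3)^{1/(α-1)}, ℓ_k = ℓ_1^{α^{k-1}}, h_k = ℓ_k(1 - 2·3^{-α^{k-1}}), one has h_{n+1}/h_n < 1/3 for n ≥ 3. -/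
/-!
Writing `u = 3 ^ α ^ (n - 1)` and `v = 3 ^ (-α ^ n)`, the sign of `f_n'` is that of
`2 n α v (u - 2) - (n - 1) (1 - 2 v) u`. Bernoulli's inequality gives `3 α ≤ u`, and `u v < 1`,
so `2 n α v < 2 n / 3 ≤ n - 1` and `u - 2 < (1 - 2 v) u`: the derivative is negative on
`(1, ∞)`, and `f_n(1) = 1 / 3`. Finally `ℓ_{k+1} = ℓ_k · 3 ^ (-α ^ (k - 1))`, which makes
`h_{n+1} / h_n = f_n(α)`.
-/

open Real Set

/-- The paper's `f_{k+1}`, indexed by `k = n - 1` to avoid truncated subtraction. -/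
noncomputable def gapRatio (k : ℕ) (α : ℝ) : ℝ :=
  (1 - 2 * (3 : ℝ) ^ (-(α ^ (k + 1)))) / ((3 : ℝ) ^ (α ^ k) - 2)

lemma gapRatio_one (k : ℕ) : gapRatio k 1 = 1 / 3 := by
  norm_num [gapRatio, rpow_neg_one]

lemma three_mul_le_three_rpow_pow {x : ℝ} (hx : 1 ≤ x) {k : ℕ} (hk : 2 ≤ k) :
    3 * x ≤ (3 : ℝ) ^ (x ^ k) := by
  have hsq : 1 ≤ x ^ 2 := one_le_pow₀ hx
  calc 3 * x ≤ 1 + x ^ 2 * 2 := by nlinarith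
    _ ≤ (1 + 2 : ℝ) ^ (x ^ 2) := one_add_mul_self_le_rpow_one_add (by norm_num) hsq
    _ = (3 : ℝ) ^ (x ^ 2) := by norm_num
    _ ≤ (3 : ℝ) ^ (x ^ k) := rpow_le_rpow_of_exponent_le (by norm_num) (pow_le_pow_right₀ hx hk)

lemma hasDerivAt_gapRatio (k : ℕ) (α : ℝ) (hα : (3 : ℝ) ^ (α ^ k) ≠ 2) :
    HasDerivAt (gapRatio k)
      ((2 * (3 : ℝ) ^ (-(α ^ (k + 1))) * log 3 * ((k + 1) * α ^ k) * ((3 : ℝ) ^ (α ^ k) - 2)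
        - (1 - 2 * (3 : ℝ) ^ (-(α ^ (k + 1)))) * ((3 : ℝ) ^ (α ^ k) * log 3 * (k * α ^ (k - 1))))
        / ((3 : ℝ) ^ (α ^ k) - 2) ^ 2) α := by
  have hnum : HasDerivAt (fun a : ℝ => 1 - 2 * (3 : ℝ) ^ (-(a ^ (k + 1))))
      (2 * (3 : ℝ) ^ (-(α ^ (k + 1))) * log 3 * ((k + 1) * α ^ k)) α := by
    have := (((hasDerivAt_pow (k + 1) α).neg.const_rpow (by norm_num : (0 : ℝ) < 3)).const_mul
      2).const_sub 1
    refine this.congr_deriv ?_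
    simp only [Pi.neg_apply, Nat.add_sub_cancel]
    push_cast
    ring
  have hden : HasDerivAt (fun a : ℝ => (3 : ℝ) ^ (a ^ k) - 2)
      ((3 : ℝ) ^ (α ^ k) * log 3 * (k * α ^ (k - 1))) α := by
    have := ((hasDerivAt_pow k α).const_rpow (by norm_num : (0 : ℝ) < 3)).sub_const 2
    exact this.congr_deriv (by ring)
  exact hnum.div hden (sub_ne_zero.2 hα)

lemma deriv_gapRatio_neg {k : ℕ} (hk : 2 ≤ k) {α : ℝ} (hα : 1 < α) :
    deriv (gapRatio k) α < 0 := by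
  have hu : 3 * α ≤ (3 : ℝ) ^ (α ^ k) := three_mul_le_three_rpow_pow hα.le hk
  rw [(hasDerivAt_gapRatio k α (ne_of_gt (by linarith))).deriv]
  refine div_neg_of_neg_of_pos ?_ (by nlinarith)
  set u := (3 : ℝ) ^ (α ^ k)
  set v := (3 : ℝ) ^ (-(α ^ (k + 1)))
  have hv : 0 < v := by positivity
  have huv : u * v < 1 := by
    rw [← rpow_add (by norm_num)]
    refine rpow_lt_one_of_one_lt_of_neg (by norm_num) ?_
    linarith [pow_lt_pow_right₀ hα (by omega : k < k + 1)]
  have hu2 : 0 < u - 2 := by linarith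
  have hk' : (2 : ℝ) ≤ k := by exact_mod_cast hk
  have h3αv : 3 * α * v < 1 := by nlinarith [mul_le_mul_of_nonneg_right hu hv.le]
  have hαv : 2 * (k + 1) * α * v < k := by nlinarith
  have hnum : u - 2 < (1 - 2 * v) * u := by nlinarith
  have key : 2 * (k + 1) * α * v * (u - 2) < k * ((1 - 2 * v) * u) :=
    calc 2 * (k + 1) * α * v * (u - 2) < k * (u - 2) := mul_lt_mul_of_pos_right hαv hu2
      _ < k * ((1 - 2 * v) * u) := mul_lt_mul_of_pos_left hnum (by positivity)
  have hpow : α ^ k = α * α ^ (k - 1) := by rw [← pow_succ']; congr 1; omega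
  rw [hpow]
  linarith [mul_lt_mul_of_pos_left key (by positivity : 0 < log 3 * α ^ (k - 1))]

theorem strictAntiOn_gapRatio {k : ℕ} (hk : 2 ≤ k) : StrictAntiOn (gapRatio k) (Ici 1) := by
  refine strictAntiOn_of_deriv_neg (convex_Ici 1) (fun α hα => ?_) (fun α hα => ?_)
  · have hu : 3 * α ≤ (3 : ℝ) ^ (α ^ k) := three_mul_le_three_rpow_pow hα hk
    have hα : (1 : ℝ) ≤ α := hα
    exact (hasDerivAt_gapRatio k α (ne_of_gt (by linarith))).continuousAt.continuousWithinAt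
  · rw [interior_Ici] at hα
    exact deriv_gapRatio_neg hk hα

lemma rpow_one_div_sub_one_rpow_mul {c : ℝ} (hc : 0 < c) {α : ℝ} (hα : α ≠ 1) (x : ℝ) :
    (c ^ (1 / (α - 1))) ^ (α * x) = (c ^ (1 / (α - 1))) ^ x * c ^ x := by
  rw [← rpow_mul hc.le, ← rpow_mul hc.le, ← rpow_add hc]
  congr 1
  field_simp [sub_ne_zero.2 hα]
  ring

lemma gap_div_gap_eq_gapRatio {α : ℝ} (hα : α ≠ 1) (k : ℕ) :
    ((1 / 3 : ℝ) ^ (1 / (α - 1))) ^ (α ^ (k + 1)) * (1 - 2 * (3 : ℝ) ^ (-(α ^ (k + 1)))) /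
      (((1 / 3 : ℝ) ^ (1 / (α - 1))) ^ (α ^ k) * (1 - 2 * (3 : ℝ) ^ (-(α ^ k))))
      = gapRatio k α := by
  have hinv : (1 / 3 : ℝ) ^ (α ^ k) = ((3 : ℝ) ^ (α ^ k))⁻¹ := by
    rw [one_div, inv_rpow (by norm_num)]
  rw [pow_succ', rpow_one_div_sub_one_rpow_mul (by norm_num) hα, ← pow_succ', hinv,
    rpow_neg (by norm_num) (α ^ k)]
  set b := ((1 / 3 : ℝ) ^ (1 / (α - 1))) ^ (α ^ k)
  set u := (3 : ℝ) ^ (α ^ k)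
  have hb : b ≠ 0 := by positivity
  have hu : u ≠ 0 := by positivity
  rw [show 1 - 2 * u⁻¹ = u⁻¹ * (u - 2) by field_simp, mul_assoc,
    mul_div_mul_left _ _ hb, mul_div_mul_left _ _ (inv_ne_zero hu)]
  rfl

theorem stmt_10 (n : ℕ) (hn : 3 ≤ n) :
    StrictAntiOn
      (fun α : ℝ => (1 - 2 * (3:ℝ) ^ (-(α ^ n))) / ((3:ℝ) ^ (α ^ (n - 1)) - 2))
      (Set.Ioo 1 2) ∧
    (∀ α ∈ Set.Ioo (1:ℝ) 2,
      (1 - 2 * (3:ℝ) ^ (-(α ^ n))) / ((3:ℝ) ^ (α ^ (n - 1)) - 2) < 1/3) ∧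
    (∀ α ∈ Set.Ioo (1:ℝ) 2, ∀ ℓ h : ℕ → ℝ,
      (∀ k : ℕ, 1 ≤ k → ℓ k = ((1/3 : ℝ) ^ (1 / (α - 1))) ^ (α ^ (k - 1))) →
      (∀ k : ℕ, 1 ≤ k → h k = ℓ k * (1 - 2 * (3:ℝ) ^ (-(α ^ (k - 1))))) →
      h (n + 1) / h n < 1/3) := by
  obtain ⟨k, rfl⟩ : ∃ k, n = k + 1 := ⟨n - 1, by omega⟩
  have hanti := strictAntiOn_gapRatio (k := k) (by omega)
  have hlt : ∀ α ∈ Ioo (1 : ℝ) 2, gapRatio k α < 1 / 3 := fun α hα =>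
    gapRatio_one k ▸ hanti self_mem_Ici hα.1.le hα.1
  simp only [Nat.add_sub_cancel]
  refine ⟨hanti.mono (Ioo_subset_Ico_self.trans Ico_subset_Ici_self), hlt, fun α hα ℓ h hℓ hh => ?_⟩
  rw [hh _ (by omega), hh _ (by omega), hℓ _ (by omega), hℓ _ (by omega)]
  simp only [Nat.add_sub_cancel]
  rw [gap_div_gap_eq_gapRatio hα.1.ne']
  exact hlt α hα
end

section
/- Let 0 < γ_k < 1/4 for all k, define δ_s = γ_1 γ_2 ⋯ γ_s, r_0 = 1, r_s = γ_s r_{s-1}^2. Suppose additionally γ_k ≤ 1/32 for all k and ∑ γ_k < ∞, and set C_0 = exp(16 ∑_{k=1}^∞ γ_k). Then for the Lebesgue function of interpolation on the Julia-type Cantor set K(γ) at the 2^s endpoints Y_{s-1}, assuming |l_m(x)| ≤ C_0 δ_s / h_{k_{i+1}, s-i-1} for each of the 2^i nodes x_m in the adjacent block J_{k_i,s-i} and |l_1(x)| ≤ 1, and the gap bounds h_{j,k} ≥ (7/8) δ_k, one concludes λ_{2^s}(x) ≤ 1 + (8/7) C_0 ∑_{i=1}^s 2^{i-1} γ_s γ_{s-1}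 ⋯ γ_{s-i+1} < 1 + 4C_0/105. -/
/-!
Since `δ_s = δ_{s-i} γ_s ⋯ γ_{s-i+1}`, the gap bound `h_i ≥ (7/8) δ_{s-i}` turns the `i`-th term of
the Lebesgue sum into at most `(8/7) C₀ γ_s ⋯ γ_{s-i+1}`. With `γ_k ≤ c = 1/32` the resulting
weighted sum is dominated by `∑ 2^{i-1} c^i = c ∑ (2c)^j < c / (1 - 2c) = 1/30`.
-/

open Finset

theorem prod_Icc_one_eq_mul_prod_range {M : Type*} [CommMonoid M] (f : ℕ → M) {s i : ℕ}
    (hi : i ≤ s) :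
    ∏ k ∈ Icc 1 s, f k = (∏ k ∈ Icc 1 (s - i), f k) * ∏ t ∈ range i, f (s - t) := by
  induction i with
  | zero => simp
  | succ n ih =>
    have hsn : s - n = s - (n + 1) + 1 := by omega
    rw [ih (by omega), hsn, prod_Icc_succ_top (by omega), ← hsn, prod_range_succ]
    ac_rfl

theorem geom_sum_lt_inv_one_sub {x : ℝ} (h0 : 0 < x) (h1 : x < 1) (n : ℕ) :
    ∑ i ∈ range n, x ^ i < (1 - x)⁻¹ := by
  rw [geom_sum_eq h1.ne, ← neg_div_neg_eq, neg_sub, neg_sub, inv_eq_one_div]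
  exact div_lt_div_of_pos_right (by linarith [pow_pos h0 n]) (by linarith)

theorem sum_Icc_two_pow_mul_pow_lt {c : ℝ} (hc0 : 0 < c) (hc : 2 * c < 1) (s : ℕ) :
    ∑ i ∈ Icc 1 s, (2 : ℝ) ^ (i - 1) * c ^ i < c * (1 - 2 * c)⁻¹ := by
  have hreindex : ∑ i ∈ Icc 1 s, (2 : ℝ) ^ (i - 1) * c ^ i = c * ∑ j ∈ range s, (2 * c) ^ j := by
    rw [← Ico_add_one_right_eq_Icc, sum_Ico_eq_sum_range, mul_sum, Nat.add_sub_cancel]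
    refine sum_congr rfl fun j _ => ?_
    rw [add_comm 1 j, Nat.add_sub_cancel, pow_succ, mul_pow]
    ring
  rw [hreindex]
  exact mul_lt_mul_of_pos_left (geom_sum_lt_inv_one_sub (by positivity) hc s) hc0

theorem sum_Icc_two_pow_mul_prod_range_lt {γ : ℕ → ℝ} {c : ℝ} (hc0 : 0 < c) (hc : 2 * c < 1)
    (hγ0 : ∀ k, 1 ≤ k → 0 ≤ γ k) (hγc : ∀ k, 1 ≤ k → γ k ≤ c) (s : ℕ) :
    ∑ i ∈ Icc 1 s, (2 : ℝ) ^ (i - 1) * ∏ t ∈ range i, γ (s - t) < c * (1 - 2 * c)⁻¹ := by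
  refine lt_of_le_of_lt (sum_le_sum fun i hi => ?_) (sum_Icc_two_pow_mul_pow_lt hc0 hc s)
  have his : ∀ t ∈ range i, 1 ≤ s - t := fun t ht => by
    have := mem_range.mp ht; have := (mem_Icc.mp hi).2; omega
  gcongr
  calc ∏ t ∈ range i, γ (s - t) ≤ ∏ _t ∈ range i, c :=
        prod_le_prod (fun t ht => hγ0 _ (his t ht)) fun t ht => hγc _ (his t ht)
    _ = c ^ i := by rw [prod_const, card_range]

theorem mul_mul_div_le_of_gap {C d p h : ℝ} (hC : 0 ≤ C) (hd : 0 < d) (hp : 0 ≤ p)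
    (hgap : 7 / 8 * d ≤ h) : C * (d * p) / h ≤ 8 / 7 * C * p := by
  have hh : 0 < h := by linarith
  rw [div_le_iff₀ hh]
  nlinarith [mul_nonneg hC hp]

/-- `h i` is the gap `h_{k_{i+1}, s-i-1}` next to the block of `2^{i-1}` nodes, and `hlam` is the
Lebesgue function bound obtained from `|l_1(x)| ≤ 1` and `|l_m(x)| ≤ C₀ δ_s / h i`. -/
theorem stmt_16_general (γ : ℕ → ℝ)
    (hγpos : ∀ k : ℕ, 1 ≤ k → 0 < γ k)
    (hγ32 : ∀ k : ℕ, 1 ≤ k → γ k ≤ 1/32)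
    (C0 : ℝ) (hC0 : C0 = Real.exp (16 * ∑' k, γ k))
    (δ : ℕ → ℝ) (hδ : ∀ s : ℕ, δ s = ∏ k ∈ Finset.Icc 1 s, γ k)
    (s : ℕ) (lam : ℝ) (h : ℕ → ℝ)
    (hgap : ∀ i ∈ Finset.Icc 1 s, (7/8) * δ (s - i) ≤ h i)
    (hlam : lam ≤ 1 + ∑ i ∈ Finset.Icc 1 s, 2 ^ (i - 1) * (C0 * δ s / h i)) :
    lam ≤ 1 + (8/7) * C0 *
        ∑ i ∈ Finset.Icc 1 s, 2 ^ (i - 1) * ∏ t ∈ Finset.range i, γ (s - t) ∧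
      lam < 1 + 4 * C0 / 105 := by
  set P : ℕ → ℝ := fun i => ∏ t ∈ range i, γ (s - t)
  have hC0pos : 0 < C0 := hC0 ▸ Real.exp_pos _
  have hterm : ∀ i ∈ Icc 1 s, C0 * δ s / h i ≤ 8 / 7 * C0 * P i := fun i hi => by
    obtain ⟨-, his⟩ := mem_Icc.mp hi
    have hδpos : 0 < δ (s - i) := hδ _ ▸ prod_pos fun k hk => hγpos k (mem_Icc.mp hk).1
    have hPnonneg : 0 ≤ P i :=
      prod_nonneg fun t ht => (hγpos _ (by have := mem_range.mp ht; omega)).le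
    rw [hδ, prod_Icc_one_eq_mul_prod_range γ his, ← hδ]
    exact mul_mul_div_le_of_gap hC0pos.le hδpos hPnonneg (hgap i hi)
  have hbound : lam ≤ 1 + 8 / 7 * C0 * ∑ i ∈ Icc 1 s, (2 : ℝ) ^ (i - 1) * P i := by
    refine hlam.trans ?_
    rw [mul_sum]
    refine (add_le_add_iff_left 1).mpr (sum_le_sum fun i hi => ?_)
    calc (2 : ℝ) ^ (i - 1) * (C0 * δ s / h i) ≤ 2 ^ (i - 1) * (8 / 7 * C0 * P i) := by
          gcongr; exact hterm i hi
      _ = 8 / 7 * C0 * (2 ^ (i - 1) * P i) := by ring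
  have hsmall : ∑ i ∈ Icc 1 s, (2 : ℝ) ^ (i - 1) * P i < 1 / 30 :=
    (sum_Icc_two_pow_mul_prod_range_lt (c := 1 / 32) (by norm_num) (by norm_num)
      (fun k hk => (hγpos k hk).le) hγ32 s).trans_eq (by norm_num)
  exact ⟨hbound, by nlinarith⟩

/-- Abstract form of the Lebesgue-function bound for the Julia-type Cantor set `K(γ)`:
`h i` denotes the gap `h_{k_{i+1}, s-i-1}` associated with the adjacent block
`J_{k_i, s-i}` of `2^{i-1}` nodes, and `lam` is the Lebesgue function value,
already bounded via `|l_1(x)| ≤ 1` and `|l_m(x)| ≤ C₀ δ_s / h i`. -/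
theorem stmt_16 (γ : ℕ → ℝ) (hγ0 : γ 0 = 0)
    (hγpos : ∀ k : ℕ, 1 ≤ k → 0 < γ k)
    (hγ4 : ∀ k : ℕ, 1 ≤ k → γ k < 1/4)
    (hγ32 : ∀ k : ℕ, 1 ≤ k → γ k ≤ 1/32)
    (hsum : Summable γ)
    (C0 : ℝ) (hC0 : C0 = Real.exp (16 * ∑' k, γ k))
    (δ : ℕ → ℝ) (hδ : ∀ s : ℕ, δ s = ∏ k ∈ Finset.Icc 1 s, γ k)
    (s : ℕ) (lam : ℝ) (h : ℕ → ℝ)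
    (hgap : ∀ i ∈ Finset.Icc 1 s, (7/8) * δ (s - i) ≤ h i)
    (hpos : ∀ i ∈ Finset.Icc 1 s, 0 < h i)
    (hlam : lam ≤ 1 + ∑ i ∈ Finset.Icc 1 s, 2 ^ (i - 1) * (C0 * δ s / h i)) :
    lam ≤ 1 + (8/7) * C0 *
        ∑ i ∈ Finset.Icc 1 s, 2 ^ (i - 1) * ∏ t ∈ Finset.range i, γ (s - t) ∧
      lam < 1 + 4 * C0 / 105 :=
  stmt_16_general γ hγpos hγ32 C0 hC0 δ hδ s lam h hgap hlam
end
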